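/- arXiv:1405.1356 — 8 statements merged into one kernel-verified Lean document; each statement's English description precedes it below -/
import Mathlib

section
/- Let F' be a family of subsets of U, each of size at most d, and let C ⊆ U with |C| ≤ d-1. Suppose exactly (d-|C|)!·(k+1)^{d-|C|} sets in F' are strict supersets of C, and for every C' with C ⊊ C' and |C'| ≤ d, strictly fewer than (d-|C'|)!·(k+1)^{d-|C'|} sets of F' contain C'. Let P = {F₁,...,F_ℓ} be a maximal subfamily of supersets of C in F' such that the sets Fⱼ \ C are pairwise disjoint. Then ℓ ≥ k+2. -/
/-- If exactly `(d-|C|)! * (k+1)^(d-|C|)` members of `F'` are strict supersets of `C`,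
while every strictly larger `C'` is contained in strictly fewer than
`(d-|C'|)! * (k+1)^(d-|C'|)` members, then any maximal sunflower `P` of supersets of `C`
in `F'` with pairwise disjoint petals has at least `k+2` members. -/
theorem stmt_1 {U : Type*} [DecidableEq U] (d k : ℕ) (hd : 1 ≤ d)
    (F' : Finset (Finset U)) (C : Finset U)
    (hsize : ∀ F ∈ F', F.card ≤ d)
    (hC : C.card ≤ d - 1)
    (heq : (F'.filter (fun F => C ⊂ F)).card =
      Nat.factorial (d - C.card) * (k + 1) ^ (d - C.card))
    (hlt : ∀ C' : Finset U, C ⊂ C' → C'.card ≤ d →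
      (F'.filter (fun F => C' ⊆ F)).card <
        Nat.factorial (d - C'.card) * (k + 1) ^ (d - C'.card))
    (P : Finset (Finset U))
    (hPsub : P ⊆ F'.filter (fun F => C ⊂ F))
    (hdisj : ∀ F ∈ P, ∀ G ∈ P, F ≠ G → Disjoint (F \ C) (G \ C))
    (hmax : ∀ F ∈ F'.filter (fun F => C ⊂ F), F ∉ P →
      ∃ G ∈ P, ¬ Disjoint (F \ C) (G \ C)) :
    k + 2 ≤ P.card := by
  by_contra h
  push_neg at h
  set c := C.card with hc
  have hm : 1 ≤ d - c := by omega
  set Y : Finset U := P.biUnion (fun G => G \ C) with hYdef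
  set B1 : ℕ := Nat.factorial (d - (c + 1)) * (k + 1) ^ (d - (c + 1)) with hB1def
  have hB1 : 1 ≤ B1 := Nat.one_le_iff_ne_zero.mpr (by positivity)
  -- every strict superset of C in F' contains some insert y C, y ∈ Y
  have hsub : F'.filter (fun F => C ⊂ F) ⊆
      Y.biUnion (fun y => F'.filter (fun F => insert y C ⊆ F)) := by
    intro F hF
    have hF' := Finset.mem_filter.mp hF
    obtain ⟨y, hyY, hyF, hyC⟩ : ∃ y ∈ Y, y ∈ F ∧ y ∉ C := by
      by_cases hFP : F ∈ P
      · obtain ⟨y, hyF, hyC⟩ := Finset.exists_of_ssubset hF'.2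
        exact ⟨y, Finset.mem_biUnion.mpr ⟨F, hFP, Finset.mem_sdiff.mpr ⟨hyF, hyC⟩⟩, hyF, hyC⟩
      · obtain ⟨G, hG, hnd⟩ := hmax F hF hFP
        rw [Finset.not_disjoint_iff] at hnd
        obtain ⟨y, hyF, hyG⟩ := hnd
        have := Finset.mem_sdiff.mp hyF
        exact ⟨y, Finset.mem_biUnion.mpr ⟨G, hG, hyG⟩, this.1, this.2⟩
    exact Finset.mem_biUnion.mpr ⟨y, hyY, Finset.mem_filter.mpr ⟨hF'.1,
      Finset.insert_subset hyF hF'.2.subset⟩⟩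
  have h1 : (F'.filter (fun F => C ⊂ F)).card ≤ Y.card * (B1 - 1) := by
    calc (F'.filter (fun F => C ⊂ F)).card
        ≤ (Y.biUnion (fun y => F'.filter (fun F => insert y C ⊆ F))).card :=
          Finset.card_le_card hsub
      _ ≤ ∑ y ∈ Y, (F'.filter (fun F => insert y C ⊆ F)).card := Finset.card_biUnion_le
      _ ≤ ∑ _y ∈ Y, (B1 - 1) := by
          apply Finset.sum_le_sum
          intro y hy
          have hyC : y ∉ C := by
            obtain ⟨G, hG, hyG⟩ := Finset.mem_biUnion.mp hy
            exact (Finset.mem_sdiff.mp hyG).2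
          have hss : C ⊂ insert y C := Finset.ssubset_insert hyC
          have hcard : (insert y C).card = c + 1 := Finset.card_insert_of_notMem hyC
          have hlt' := hlt (insert y C) hss (by omega)
          rw [hcard] at hlt'
          omega
      _ = Y.card * (B1 - 1) := by rw [Finset.sum_const, smul_eq_mul]
  have hY : Y.card ≤ (k + 1) * (d - c) := by
    calc Y.card ≤ ∑ G ∈ P, (G \ C).card := Finset.card_biUnion_le
      _ ≤ ∑ _G ∈ P, (d - c) := by
          apply Finset.sum_le_sum
          intro G hG
          have hGF := Finset.mem_filter.mp (hPsub hG)
          have h1 : (G \ C).card = G.card - c := Finset.card_sdiff_of_subset hGF.2.subset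
          have := hsize G hGF.1
          omega
      _ = P.card * (d - c) := by rw [Finset.sum_const, smul_eq_mul]
      _ ≤ (k + 1) * (d - c) := Nat.mul_le_mul_right _ (by omega)
  have hfac : Nat.factorial (d - c) * (k + 1) ^ (d - c) = (d - c) * (k + 1) * B1 := by
    have h2 : d - c = (d - (c + 1)) + 1 := by omega
    rw [hB1def, h2, Nat.factorial_succ, pow_succ]
    ring
  have hfin : (d - c) * (k + 1) * B1 ≤ (k + 1) * (d - c) * (B1 - 1) := by
    rw [← hfac, ← heq]
    exact le_trans h1 (Nat.mul_le_mul_right _ hY)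
  obtain ⟨E, hE⟩ : ∃ E, B1 = E + 1 := ⟨B1 - 1, by omega⟩
  rw [hE] at hfin
  simp only [Nat.add_sub_cancel] at hfin
  nlinarith [hfin]
end

section
/- Let F be a family of subsets of U each of size at most d, and suppose F contains d(k-1)+1 sets F₁,...,F_{d(k-1)+1}, each a strict superset of a common set C, whose pairwise intersections all equal C. If the family F ∪ {F} for some additional superset F ⊋ C admits a matching of k pairwise disjoint sets, then F itself admits a matching of k pairwise disjoint sets. -/
/-- If `Fam` contains `d(k-1)+1` sets pairwise intersecting exactly in a common core `C`
(each a strict superset of `C`), and `Fam ∪ {F}` for some further strict superset `F` of `C`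
has a matching of `k` pairwise disjoint sets, then so does `Fam` itself. -/
theorem stmt_3 {U : Type*} [DecidableEq U] (d k : ℕ)
    (Fam : Finset (Finset U)) (C F : Finset U)
    (hsize : ∀ G ∈ Fam, G.card ≤ d)
    (hF : C ⊂ F) (hFcard : F.card ≤ d)
    (Fi : Fin (d * (k - 1) + 1) → Finset U)
    (hmem : ∀ i, Fi i ∈ Fam)
    (hsup : ∀ i, C ⊂ Fi i)
    (hinter : ∀ i j, i ≠ j → Fi i ∩ Fi j = C)
    (hM : ∃ M : Finset (Finset U), M ⊆ insert F Fam ∧ M.card = k ∧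
      ∀ A ∈ M, ∀ B ∈ M, A ≠ B → Disjoint A B) :
    ∃ M : Finset (Finset U), M ⊆ Fam ∧ M.card = k ∧
      ∀ A ∈ M, ∀ B ∈ M, A ≠ B → Disjoint A B := by
  obtain ⟨M, hMsub, hMcard, hMdisj⟩ := hM
  by_cases hFM : F ∈ M
  · set M' := M.erase F with hM'
    have hM'sub : M' ⊆ Fam := by
      intro A hA
      rcases Finset.mem_insert.mp (hMsub (M.erase_subset F hA)) with rfl | h
      · exact absurd rfl (Finset.ne_of_mem_erase hA)
      · exact h
    have hM'card : M'.card = k - 1 := by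
      rw [Finset.card_erase_of_mem hFM, hMcard]
    set S := M'.biUnion id with hS
    have hScard : S.card ≤ d * (k - 1) := by
      calc S.card ≤ ∑ B ∈ M', B.card := Finset.card_biUnion_le
        _ ≤ ∑ _B ∈ M', d := Finset.sum_le_sum (fun B hB => hsize B (hM'sub hB))
        _ = d * (k - 1) := by rw [Finset.sum_const, hM'card, smul_eq_mul, mul_comm]
    have hCS : ∀ B ∈ M', Disjoint C B := fun B hB =>
      (hMdisj F hFM B (M.erase_subset F hB)
        (Finset.ne_of_mem_erase hB).symm).mono_left hF.subset
    have hex : ∃ i, Disjoint (Fi i) S := by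
      by_contra hcon
      push_neg at hcon
      have hx : ∀ i, ∃ z, z ∈ Fi i ∧ z ∈ S := fun i =>
        Finset.not_disjoint_iff.mp (hcon i)
      choose x hx1 hx2 using hx
      have hxC : ∀ i, x i ∉ C := by
        intro i hC
        obtain ⟨B, hB, hxB⟩ := Finset.mem_biUnion.mp (hx2 i)
        exact Finset.disjoint_left.mp (hCS B hB) hC hxB
      have hinj : Function.Injective x := by
        intro i j hij
        by_contra hne
        have hmemx : x i ∈ Fi i ∩ Fi j :=
          Finset.mem_inter.mpr ⟨hx1 i, hij ▸ hx1 j⟩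
        rw [hinter i j hne] at hmemx
        exact hxC i hmemx
      have hle := Finset.card_le_card_of_injOn (s := Finset.univ) (t := S) x
        (fun i _ => hx2 i) hinj.injOn
      simp only [Finset.card_univ, Fintype.card_fin] at hle
      omega
    obtain ⟨i, hi⟩ := hex
    have hnotmem : Fi i ∉ M' := by
      intro h
      have hdd : Disjoint (Fi i) (Fi i) :=
        hi.mono_right (Finset.subset_biUnion_of_mem id h)
      have he : Fi i = ∅ := disjoint_self.mp hdd
      exact Finset.not_ssubset_empty C (he ▸ hsup i)
    refine ⟨insert (Fi i) M', Finset.insert_subset (hmem i) hM'sub, ?_, ?_⟩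
    · rw [Finset.card_insert_of_notMem hnotmem, hM'card]
      have hk : 1 ≤ k := hMcard ▸ Finset.card_pos.mpr ⟨F, hFM⟩
      omega
    · intro A hA B hB hne
      rcases Finset.mem_insert.mp hA with rfl | hA' <;>
        rcases Finset.mem_insert.mp hB with rfl | hB'
      · exact absurd rfl hne
      · exact hi.mono_right (Finset.subset_biUnion_of_mem id hB')
      · exact (hi.mono_right (Finset.subset_biUnion_of_mem id hA')).symm
      · exact hMdisj A (M.erase_subset F hA') B (M.erase_subset F hB') hne
  · refine ⟨M, fun A hA => ?_, hMcard, hMdisj⟩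
    rcases Finset.mem_insert.mp (hMsub hA) with rfl | h
    · exact absurd hA hFM
    · exact h
end

section
/- Let Q be a parameterized graph problem that admits a c-k-stream obstructing graph G = (V,E) with m edges, i.e., for every edge e ∈ E there is a set R(e) of c non-edges such that for all F ⊆ E: the instance (G[F ∪ R(e)], k) is in Q iff e ∈ F. Then any function M mapping subsets F ⊆ E to memory states such that the answer on stream ⟨F, R⟩ depends only on (M(F), R) and is always correct must be injective; in particular, M takes at least 2^m distinct values, i.e., requires at least m bits. -/
/-- If `G = (V, E)` is a `c`-`k`-stream obstructing graph for the parameterized graph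
problem `Q`, then any memory map `M` on subsets of `E` for which a decision function `g`,
depending only on the memory state and the remainder `R e`, is always correct, must be
injective on subsets of `E`; hence at least `2^m` memory states are needed. -/
theorem stmt_6 {V : Type*} (Q : SimpleGraph V → ℕ → Prop) (c k : ℕ)
    (E : Finset (Sym2 V)) (hdiag : ∀ f ∈ E, ¬ f.IsDiag)
    (R : Sym2 V → Finset (Sym2 V))
    (hR : ∀ e ∈ E, (R e).card = c ∧ ∀ f ∈ R e, ¬ f.IsDiag ∧ f ∉ E)
    (hobs : ∀ e ∈ E, ∀ F ⊆ E,
      (Q (SimpleGraph.fromEdgeSet ((↑F : Set (Sym2 V)) ∪ ↑(R e))) k ↔ e ∈ F))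
    {σ : Type*} [Fintype σ]
    (M : Finset (Sym2 V) → σ) (g : σ → Finset (Sym2 V) → Bool)
    (hcorrect : ∀ F ⊆ E, ∀ e ∈ E,
      (g (M F) (R e) = true ↔
        Q (SimpleGraph.fromEdgeSet ((↑F : Set (Sym2 V)) ∪ ↑(R e))) k)) :
    (∀ F ⊆ E, ∀ F' ⊆ E, M F = M F' → F = F') ∧ 2 ^ E.card ≤ Fintype.card σ := by
  have hinj : ∀ F ⊆ E, ∀ F' ⊆ E, M F = M F' → F = F' := by
    intro F hF F' hF' hM
    ext a
    by_cases ha : a ∈ E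
    · have h1 := (hcorrect F hF a ha).trans (hobs a ha F hF)
      have h2 := (hcorrect F' hF' a ha).trans (hobs a ha F' hF')
      rw [hM] at h1
      exact (h1.symm.trans h2)
    · constructor
      · intro h; exact absurd (hF h) ha
      · intro h; exact absurd (hF' h) ha
  refine ⟨hinj, ?_⟩
  have := Finset.card_le_card_of_injOn M (fun F _ => Finset.mem_univ (M F))
    (fun F hF F' hF' h => hinj F (Finset.mem_powerset.mp hF) F' (Finset.mem_powerset.mp hF') h)
    (s := E.powerset)
  simpa [Finset.card_powerset] using this
end

section
/- Let E be a set of m pairwise disjoint edges, and let p, w be two additional vertices. For e = {u,v} ∈ E let R(e) = {{p,u},{v,w}}. Then for every F ⊆ E, the graph on V(E) ∪ {p,w} with edge set F ∪ R(e) contains an induced path on four vertices if and only if e ∈ F. -/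
/-- `G` contains an induced path on four vertices. -/
def HasInducedP4 {V : Type*} (G : SimpleGraph V) : Prop :=
  ∃ a b c d : V, a ≠ c ∧ a ≠ d ∧ b ≠ d ∧
    G.Adj a b ∧ G.Adj b c ∧ G.Adj c d ∧ ¬ G.Adj a c ∧ ¬ G.Adj b d ∧ ¬ G.Adj a d

/-- For a perfect matching `E`, an edge `e = {u,v} ∈ E` and extra edges `{p,u}`, `{v,w}`
with `p, w` outside the matching: for every `F ⊆ E` the graph with edge set
`F ∪ {{p,u},{v,w}}` contains an induced `P₄` iff `e ∈ F`. -/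
theorem stmt_9 {V : Type*} (E : Finset (Sym2 V)) (p w u vt : V)
    (hE : ∀ e ∈ E, ¬ e.IsDiag)
    (hdisj : ∀ e ∈ E, ∀ f ∈ E, e ≠ f → ∀ x, x ∈ e → x ∉ f)
    (hp : ∀ e ∈ E, p ∉ e) (hw : ∀ e ∈ E, w ∉ e) (hpw : p ≠ w)
    (he : s(u, vt) ∈ E)
    (F : Finset (Sym2 V)) (hF : F ⊆ E) :
    HasInducedP4 (SimpleGraph.fromEdgeSet
      ((↑F : Set (Sym2 V)) ∪ {s(p, u), s(vt, w)})) ↔ s(u, vt) ∈ F := by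
  have huv : u ≠ vt := by
    have := hE _ he
    simpa [Sym2.isDiag_iff_proj_eq] using this
  have hpu : p ≠ u := fun h => hp _ he (by simp [h])
  have hpv : p ≠ vt := fun h => hp _ he (by simp [h])
  have hwu : w ≠ u := fun h => hw _ he (by simp [h])
  have hwv : w ≠ vt := fun h => hw _ he (by simp [h])
  have hpF : ∀ f ∈ F, p ∉ f := fun f hf => hp f (hF hf)
  have hwF : ∀ f ∈ F, w ∉ f := fun f hf => hw f (hF hf)
  constructor
  · rintro ⟨a, b, c, d, hac, had, hbd, hab, hbc, hcd, nac, nbd, nad⟩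
    by_contra hne
    have huF : ∀ f ∈ F, u ∉ f := by
      intro f hf
      have hfne : s(u, vt) ≠ f := fun h => hne (h ▸ hf)
      exact hdisj _ he f (hF hf) hfne u (by simp)
    have hvF : ∀ f ∈ F, vt ∉ f := by
      intro f hf
      have hfne : s(u, vt) ≠ f := fun h => hne (h ▸ hf)
      exact hdisj _ he f (hF hf) hfne vt (by simp)
    -- every vertex has at most one neighbor
    have key : ∀ x y z : V,
        (SimpleGraph.fromEdgeSet ((↑F : Set (Sym2 V)) ∪ {s(p, u), s(vt, w)})).Adj x y →
        (SimpleGraph.fromEdgeSet ((↑F : Set (Sym2 V)) ∪ {s(p, u), s(vt, w)})).Adj x z →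
        y = z := by
      intro x y z hxy hxz
      rw [SimpleGraph.fromEdgeSet_adj] at hxy hxz
      obtain ⟨hxy, hxyne⟩ := hxy
      obtain ⟨hxz, hxzne⟩ := hxz
      rcases hxy with hy | hy
      · rcases hxz with hz | hz
        · -- both edges in F
          by_cases hEq : s(x, y) = s(x, z)
          · rcases Sym2.eq_iff.mp hEq with ⟨_, h⟩ | ⟨h, _⟩
            · exact h
            · exact absurd h hxzne
          · exact absurd (Sym2.mem_mk_left x z) (hdisj _ (hF hy) _ (hF hz)
              (fun h => hEq h) x (Sym2.mem_mk_left x y))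
        · -- second edge special
          simp only [Set.mem_insert_iff, Set.mem_singleton_iff] at hz
          rcases hz with hz | hz <;> rcases Sym2.eq_iff.mp hz with ⟨h1, h2⟩ | ⟨h1, h2⟩
          · exact absurd (h1 ▸ Sym2.mem_mk_left x y) (hpF _ hy)
          · exact absurd (h1 ▸ Sym2.mem_mk_left x y) (huF _ hy)
          · exact absurd (h1 ▸ Sym2.mem_mk_left x y) (hvF _ hy)
          · exact absurd (h1 ▸ Sym2.mem_mk_left x y) (hwF _ hy)
      · rcases hxz with hz | hz
        · simp only [Set.mem_insert_iff, Set.mem_singleton_iff] at hy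
          rcases hy with hy | hy <;> rcases Sym2.eq_iff.mp hy with ⟨h1, h2⟩ | ⟨h1, h2⟩
          · exact absurd (h1 ▸ Sym2.mem_mk_left x z) (hpF _ hz)
          · exact absurd (h1 ▸ Sym2.mem_mk_left x z) (huF _ hz)
          · exact absurd (h1 ▸ Sym2.mem_mk_left x z) (hvF _ hz)
          · exact absurd (h1 ▸ Sym2.mem_mk_left x z) (hwF _ hz)
        · simp only [Set.mem_insert_iff, Set.mem_singleton_iff] at hy hz
          rcases hy with hy | hy <;> rcases hz with hz | hz <;>
            rcases Sym2.eq_iff.mp hy with ⟨h1, h2⟩ | ⟨h1, h2⟩ <;>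
            rcases Sym2.eq_iff.mp hz with ⟨h3, h4⟩ | ⟨h3, h4⟩ <;>
            subst_vars <;> first
              | rfl
              | (exfalso; tauto)
    exact hac (key b a c (hab.symm) hbc)
  · intro hmem
    refine ⟨p, u, vt, w, hpv, hpw, hwu.symm, ?_, ?_, ?_, ?_, ?_, ?_⟩
    · exact (SimpleGraph.fromEdgeSet_adj _).mpr ⟨Or.inr (by simp), hpu⟩
    · exact (SimpleGraph.fromEdgeSet_adj _).mpr ⟨Or.inl (by exact_mod_cast hmem), huv⟩
    · exact (SimpleGraph.fromEdgeSet_adj _).mpr ⟨Or.inr (by simp), hwv.symm⟩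
    · -- ¬ Adj p vt
      rw [SimpleGraph.fromEdgeSet_adj]
      rintro ⟨h | h, -⟩
      · exact hpF _ h (by simp)
      · simp only [Set.mem_insert_iff, Set.mem_singleton_iff, Sym2.eq_iff] at h
        tauto
    · -- ¬ Adj u w
      rw [SimpleGraph.fromEdgeSet_adj]
      rintro ⟨h | h, -⟩
      · exact hwF _ h (by simp)
      · simp only [Set.mem_insert_iff, Set.mem_singleton_iff, Sym2.eq_iff] at h
        tauto
    · -- ¬ Adj p w
      rw [SimpleGraph.fromEdgeSet_adj]
      rintro ⟨h | h, -⟩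
      · exact hpF _ h (by simp)
      · simp only [Set.mem_insert_iff, Set.mem_singleton_iff, Sym2.eq_iff] at h
        tauto
end

section
/- Let G = (V,E) be a graph and suppose a subset A' ⊆ E has the property that every edge of E \ A' is incident to some vertex that has at least 2k+1 incident edges within A'. Then a set S of at most 2k vertices is a vertex cover of G[A'] if and only if it is a vertex cover of G. -/
/-- `S` is a vertex cover of the edge set `E`. -/
def IsVC {V : Type*} (E : Set (Sym2 V)) (S : Set V) : Prop :=
  ∀ e ∈ E, ∃ x ∈ S, x ∈ e

/-- If every edge of `G` outside `A'` is incident to a vertex with at least `2k+1`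
incident edges inside `A'`, then a set of at most `2k` vertices is a vertex cover of
`G[A']` iff it is a vertex cover of `G`. -/
theorem stmt_11 {V : Type*} (G : SimpleGraph V) (k : ℕ) (A' : Set (Sym2 V))
    (hA : A' ⊆ G.edgeSet)
    (hdeg : ∀ e ∈ G.edgeSet \ A', ∃ x, x ∈ e ∧
      ∃ T : Finset (Sym2 V), (↑T : Set (Sym2 V)) ⊆ A' ∧ (∀ f ∈ T, x ∈ f) ∧
        2 * k + 1 ≤ T.card)
    (S : Finset V) (hS : S.card ≤ 2 * k) :
    IsVC A' (↑S : Set V) ↔ IsVC G.edgeSet (↑S : Set V) := by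
  classical
  constructor
  · intro hVC e he
    by_cases heA : e ∈ A'
    · exact hVC e heA
    · obtain ⟨x, hx, T, hTA, hTx, hTcard⟩ := hdeg e ⟨he, heA⟩
      by_cases hxS : x ∈ S
      · exact ⟨x, hxS, hx⟩
      · exfalso
        have hcov : ∀ f ∈ T, ∃ y, y ∈ S ∧ y ∈ f ∧ y ≠ x := by
          intro f hf
          obtain ⟨y, hyS, hyf⟩ := hVC f (hTA hf)
          exact ⟨y, hyS, hyf, fun h => hxS (h ▸ hyS)⟩
        choose g hgS hgf hgx using hcov
        set h : Sym2 V → V := fun f => if hf : f ∈ T then g f hf else x with hh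
        have hmaps : ∀ f ∈ T, h f ∈ S := by
          intro f hf
          simp only [hh, dif_pos hf]
          exact hgS f hf
        have hlt : S.card < T.card := lt_of_le_of_lt hS (by omega)
        obtain ⟨f, hf, f', hf', hne, heq⟩ :=
          Finset.exists_ne_map_eq_of_card_lt_of_maps_to hlt hmaps
        apply hne
        have e1 : h f = g f hf := by simp [hh, dif_pos hf]
        have e2 : h f' = g f' hf' := by simp [hh, dif_pos hf']
        set y := g f hf with hy
        have hyf' : y ∈ f' := by
          have : g f' hf' = y := by rw [← e2, ← heq, e1]
          rw [← this]; exact hgf f' hf'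
        have hxy : x ≠ y := fun h => (hgx f hf) h.symm
        have h1 : f = s(x, y) := ((Sym2.mem_and_mem_iff hxy).mp ⟨hTx f hf, hgf f hf⟩)
        have h2 : f' = s(x, y) := ((Sym2.mem_and_mem_iff hxy).mp ⟨hTx f' hf', hyf'⟩)
        rw [h1, h2]
  · intro hVC e he
    exact hVC e (hA he)
end

section
/- If a graph H has a set A' of edges such that |A'| > 2k(2k+1) and every vertex has at most 2k+1 incident edges in A', then H[A'] has no vertex cover of size at most 2k; consequently H[A'] (and any supergraph) has no edge dominating set of size at most k. -/
lemma vc_count {V : Type*} [DecidableEq V] (k : ℕ) (A' : Finset (Sym2 V))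
    (hdeg : ∀ x : V, (A'.filter (fun e => x ∈ e)).card ≤ 2 * k + 1)
    (S : Finset V) (hvc : IsVC (↑A' : Set (Sym2 V)) (↑S : Set V)) :
    A'.card ≤ S.card * (2 * k + 1) := by
  have hsub : A' ⊆ S.biUnion (fun x => A'.filter (fun e => x ∈ e)) := by
    intro e he
    obtain ⟨x, hxS, hxe⟩ := hvc e (by exact_mod_cast he)
    exact Finset.mem_biUnion.2 ⟨x, by exact_mod_cast hxS, Finset.mem_filter.2 ⟨he, hxe⟩⟩
  calc A'.card ≤ (S.biUnion (fun x => A'.filter (fun e => x ∈ e))).card :=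
        Finset.card_le_card hsub
    _ ≤ ∑ x ∈ S, (A'.filter (fun e => x ∈ e)).card := Finset.card_biUnion_le
    _ ≤ ∑ _x ∈ S, (2 * k + 1) := Finset.sum_le_sum fun x _ => hdeg x
    _ = S.card * (2 * k + 1) := by simp [Finset.sum_const, mul_comm]

/-- If `|A'| > 2k(2k+1)` and every vertex is incident to at most `2k+1` edges of `A'`,
then the graph with edge set `A'` has no vertex cover of size at most `2k`, and
consequently no edge set containing `A'` has an edge dominating set of size at most `k`. -/
theorem stmt_12 {V : Type*} [DecidableEq V] (k : ℕ) (A' : Finset (Sym2 V))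
    (hdiag : ∀ e ∈ A', ¬ e.IsDiag)
    (hbig : 2 * k * (2 * k + 1) < A'.card)
    (hdeg : ∀ x : V, (A'.filter (fun e => x ∈ e)).card ≤ 2 * k + 1) :
    (¬ ∃ S : Finset V, S.card ≤ 2 * k ∧ IsVC (↑A' : Set (Sym2 V)) (↑S : Set V)) ∧
    (∀ E : Set (Sym2 V), (↑A' : Set (Sym2 V)) ⊆ E →
      ¬ ∃ D : Finset (Sym2 V), (↑D : Set (Sym2 V)) ⊆ E ∧ D.card ≤ k ∧
        ∀ f ∈ E, f ∈ D ∨ ∃ e ∈ D, ∃ x, x ∈ e ∧ x ∈ f) := by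
  have key : ∀ S : Finset V, S.card ≤ 2 * k →
      ¬ IsVC (↑A' : Set (Sym2 V)) (↑S : Set V) := by
    intro S hS hvc
    have := vc_count k A' hdeg S hvc
    have : A'.card ≤ 2 * k * (2 * k + 1) :=
      this.trans (Nat.mul_le_mul_right _ hS)
    omega
  refine ⟨fun ⟨S, hS, hvc⟩ => key S hS hvc, ?_⟩
  intro E hAE ⟨D, hDE, hDk, hdom⟩
  set S : Finset V := D.biUnion (fun e => {e.out.1, e.out.2}) with hSdef
  have hScard : S.card ≤ 2 * k := by
    calc S.card ≤ ∑ e ∈ D, ({e.out.1, e.out.2} : Finset V).card := Finset.card_biUnion_le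
      _ ≤ ∑ _e ∈ D, 2 := Finset.sum_le_sum fun e _ =>
          (Finset.card_insert_le _ _).trans (by simp)
      _ = D.card * 2 := by simp [mul_comm]
      _ ≤ k * 2 := Nat.mul_le_mul_right _ hDk
      _ = 2 * k := mul_comm _ _
  refine key S hScard ?_
  intro f hf
  have hfA : f ∈ A' := by exact_mod_cast hf
  rcases hdom f (hAE hf) with hfD | ⟨e, heD, x, hxe, hxf⟩
  · refine ⟨f.out.1, ?_, Sym2.out_fst_mem f⟩
    exact_mod_cast Finset.mem_biUnion.2 ⟨f, hfD, by simp⟩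
  · refine ⟨x, ?_, hxf⟩
    have : x = e.out.1 ∨ x = e.out.2 := by
      have := e.out_eq
      rw [← this] at hxe
      exact Sym2.mem_iff.1 hxe
    exact_mod_cast Finset.mem_biUnion.2 ⟨e, heD, by rcases this with h | h <;> simp [h]⟩
end

section
/- Let G = (V,E) be a graph, let A' ⊆ E be a set of edges of G and let V(A') be the set of endpoints of edges in A'. Suppose G has an edge dominating set S of size k, and every edge of G with an endpoint outside V(A') has its other endpoint in V(A') with A'-degree at least 2k+1. Then the subgraph of G induced on V(A') has an edge dominating set of size at most k. -/
/-- Let `A' ⊆ E(G)` and let `V(A')` be the endpoints of `A'`. If every edge of `G` with an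
endpoint outside `V(A')` has its other endpoint incident to at least `2k+1` edges of `A'`,
and `G` has an edge dominating set of size at most `k`, then the subgraph of `G` induced
on `V(A')` has an edge dominating set of size at most `k`. -/
theorem stmt_14 {V : Type*} (G : SimpleGraph V) (k : ℕ) (A' : Set (Sym2 V))
    (hA : A' ⊆ G.edgeSet)
    (hdeg : ∀ e ∈ G.edgeSet, ∀ x y : V, e = s(x, y) →
      x ∉ {z : V | ∃ f ∈ A', z ∈ f} →
      ∃ T : Finset (Sym2 V), (↑T : Set (Sym2 V)) ⊆ A' ∧ (∀ f ∈ T, y ∈ f) ∧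
        2 * k + 1 ≤ T.card)
    (S : Finset (Sym2 V)) (hS : (↑S : Set (Sym2 V)) ⊆ G.edgeSet)
    (hScard : S.card ≤ k)
    (hSdom : ∀ f ∈ G.edgeSet, f ∈ S ∨ ∃ e ∈ S, ∃ x, x ∈ e ∧ x ∈ f) :
    ∃ S' : Finset (Sym2 V),
      (↑S' : Set (Sym2 V)) ⊆
        {e ∈ G.edgeSet | ∀ x, x ∈ e → x ∈ {z : V | ∃ f ∈ A', z ∈ f}} ∧
      S'.card ≤ k ∧
      ∀ f ∈ {e ∈ G.edgeSet | ∀ x, x ∈ e → x ∈ {z : V | ∃ f ∈ A', z ∈ f}},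
        f ∈ S' ∨ ∃ e ∈ S', ∃ x, x ∈ e ∧ x ∈ f := by
  classical
  have key : ∀ e ∈ S, ∃ g, g ∈ G.edgeSet ∧
      (∀ z, z ∈ g → z ∈ {z : V | ∃ f ∈ A', z ∈ f}) ∧
      (∀ x, x ∈ e → x ∈ {z : V | ∃ f ∈ A', z ∈ f} → x ∈ g) := by
    intro e he
    by_cases hP : ∀ z, z ∈ e → z ∈ {z : V | ∃ f ∈ A', z ∈ f}
    · exact ⟨e, hS he, hP, fun x hx _ => hx⟩
    · push_neg at hP
      obtain ⟨a, ha, haV⟩ := hP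
      obtain ⟨b, hb⟩ := (Sym2.mem_iff_exists).1 ha
      obtain ⟨T, hTA, hTb, hTcard⟩ := hdeg e (hS he) a b hb haV
      have hTne : T.Nonempty := Finset.card_pos.1 (by omega)
      obtain ⟨g, hgT⟩ := hTne
      have hgA : g ∈ A' := hTA hgT
      refine ⟨g, hA hgA, fun z hz => ⟨g, hgA, hz⟩, ?_⟩
      intro x hx hxV
      rw [hb, Sym2.mem_iff] at hx
      rcases hx with rfl | rfl
      · exact absurd hxV haV
      · exact hTb g hgT
  choose! g hg1 hg2 hg3 using key
  refine ⟨S.image g, ?_, Finset.card_image_le.trans hScard, ?_⟩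
  · intro f hf
    simp only [Finset.coe_image, Set.mem_image, Finset.mem_coe] at hf
    obtain ⟨e, heS, rfl⟩ := hf
    exact ⟨hg1 e heS, hg2 e heS⟩
  · intro f hf
    obtain ⟨hfE, hfV⟩ := hf
    rcases hSdom f hfE with hfS | ⟨e, heS, x, hxe, hxf⟩
    · right
      refine ⟨g f, Finset.mem_image_of_mem _ hfS, f.out.1, ?_, Sym2.out_fst_mem f⟩
      exact hg3 f hfS _ (Sym2.out_fst_mem f) (hfV _ (Sym2.out_fst_mem f))
    · right
      exact ⟨g e, Finset.mem_image_of_mem _ heS, x,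
        hg3 e heS x hxe (hfV x hxf), hxf⟩
end

section
/- Let f : P(N) × P(N) → Bool be defined by f(V₁,V₂) = true iff the graph on vertex set N ∪ {u,v} with edge set C(V₁) ∪ S(V₂) is a disjoint union of cliques, where C(V₁) is the edge set of a clique on V₁ ∪ {u} and S(V₂) is the edge set of a star with center v and leaves V₂ ∪ {u}. Then the family {(W,W) : W ⊆ N} is a fooling set for f with value true: f(W,W) = true for all W, and for distinct W, W' ⊆ N, f(W,W') = false or f(W',W) = false. -/
/-- A graph is a disjoint union of cliques. -/
def IsClusterGraph {V : Type*} (G : SimpleGraph V) : Prop :=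
  ∀ x y : V, G.Reachable x y → x ≠ y → G.Adj x y

/-- Edges of a clique on `W ∪ {u}`. -/
def cliqueEdges {V : Type*} (u : V) (W : Set V) : Set (Sym2 V) :=
  {p | ∃ x ∈ insert u W, ∃ y ∈ insert u W, x ≠ y ∧ p = s(x, y)}

/-- Edges of a star with center `v` and leaves `W ∪ {u}`. -/
def starEdges {V : Type*} (v u : V) (W : Set V) : Set (Sym2 V) :=
  {p | ∃ x ∈ insert u W, p = s(v, x)}

lemma adj_iff' {V : Type*} (u v : V) (W W' : Set V) {a b : V} :
    (SimpleGraph.fromEdgeSet (cliqueEdges u W ∪ starEdges v u W')).Adj a b ↔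
      a ≠ b ∧ ((a ∈ insert u W ∧ b ∈ insert u W) ∨
        (a = v ∧ b ∈ insert u W') ∨ (b = v ∧ a ∈ insert u W')) := by
  rw [SimpleGraph.fromEdgeSet_adj]
  constructor
  · rintro ⟨h, hne⟩
    refine ⟨hne, ?_⟩
    rcases h with h | h
    · obtain ⟨x, hx, y, hy, hxy, hp⟩ := h
      rw [Sym2.eq_iff] at hp
      rcases hp with ⟨rfl, rfl⟩ | ⟨rfl, rfl⟩
      · exact Or.inl ⟨hx, hy⟩
      · exact Or.inl ⟨hy, hx⟩
    · obtain ⟨x, hx, hp⟩ := h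
      rw [Sym2.eq_iff] at hp
      rcases hp with ⟨rfl, rfl⟩ | ⟨rfl, rfl⟩
      · exact Or.inr (Or.inl ⟨rfl, hx⟩)
      · exact Or.inr (Or.inr ⟨rfl, hx⟩)
  · rintro ⟨hne, h⟩
    refine ⟨?_, hne⟩
    rcases h with ⟨ha, hb⟩ | ⟨rfl, hb⟩ | ⟨rfl, ha⟩
    · exact Or.inl ⟨a, ha, b, hb, hne, rfl⟩
    · exact Or.inr ⟨b, hb, rfl⟩
    · exact Or.inr ⟨a, ha, Sym2.eq_swap.symm⟩

lemma endpoint_mem {V : Type*} (u v : V) (W : Set V) (hv : v ∉ insert u W) {a b : V}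
    (h : (SimpleGraph.fromEdgeSet (cliqueEdges u W ∪ starEdges v u W)).Reachable a b)
    (hne : a ≠ b) : a ∈ insert v (insert u W) := by
  obtain ⟨w⟩ := h
  cases w with
  | nil => exact absurd rfl hne
  | cons hadj _ =>
    rw [adj_iff'] at hadj
    rcases hadj.2 with ⟨ha, _⟩ | ⟨rfl, _⟩ | ⟨_, ha⟩
    · exact Set.mem_insert_of_mem _ ha
    · exact Set.mem_insert _ _
    · exact Set.mem_insert_of_mem _ ha

lemma diag_cluster {V : Type*} (u v : V) (W : Set V) (hv : v ∉ insert u W) :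
    IsClusterGraph (SimpleGraph.fromEdgeSet (cliqueEdges u W ∪ starEdges v u W)) := by
  intro a b hr hne
  have ha := endpoint_mem u v W hv hr hne
  have hb := endpoint_mem u v W hv hr.symm hne.symm
  rw [adj_iff']
  refine ⟨hne, ?_⟩
  rcases ha with rfl | ha
  · rcases hb with rfl | hb
    · exact absurd rfl hne
    · exact Or.inr (Or.inl ⟨rfl, hb⟩)
  · rcases hb with rfl | hb
    · exact Or.inr (Or.inr ⟨rfl, ha⟩)
    · exact Or.inl ⟨ha, hb⟩

lemma off_diag_not_cluster {V : Type*} {N : Set V} (u v : V)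
    (hu : u ∉ N) (hv : v ∉ N) (huv : u ≠ v)
    {W W' : Set V} (hW : W ⊆ N) (hW' : W' ⊆ N) {x : V} (hx : x ∈ W) (hx' : x ∉ W') :
    ¬ IsClusterGraph (SimpleGraph.fromEdgeSet (cliqueEdges u W ∪ starEdges v u W')) := by
  intro h
  have hxN := hW hx
  have hxu : x ≠ u := fun e => hu (e ▸ hxN)
  have hxv : x ≠ v := fun e => hv (e ▸ hxN)
  have h1 : (SimpleGraph.fromEdgeSet (cliqueEdges u W ∪ starEdges v u W')).Adj x u :=
    (adj_iff' u v W W').mpr ⟨hxu, Or.inl ⟨Set.mem_insert_of_mem _ hx, Set.mem_insert _ _⟩⟩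
  have h2 : (SimpleGraph.fromEdgeSet (cliqueEdges u W ∪ starEdges v u W')).Adj u v :=
    (adj_iff' u v W W').mpr ⟨huv, Or.inr (Or.inr ⟨rfl, Set.mem_insert _ _⟩)⟩
  have hadj := h x v (h1.reachable.trans h2.reachable) hxv
  rw [adj_iff'] at hadj
  rcases hadj.2 with ⟨_, hb⟩ | ⟨e, _⟩ | ⟨_, ha⟩
  · rcases hb with e | e
    · exact huv e.symm
    · exact hv (hW e)
  · exact hxv e
  · rcases ha with e | e
    · exact hxu e
    · exact hx' e

/-- The family `{(W, W) : W ⊆ N}` is a fooling set with value `true` for the function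
deciding whether the clique on `V₁ ∪ {u}` together with the star at `v` with leaves
`V₂ ∪ {u}` forms a disjoint union of cliques. -/
theorem stmt_15 {V : Type*} (N : Set V) (u v : V)
    (hu : u ∉ N) (hv : v ∉ N) (huv : u ≠ v) :
    (∀ W ⊆ N,
      IsClusterGraph (SimpleGraph.fromEdgeSet (cliqueEdges u W ∪ starEdges v u W))) ∧
    (∀ W ⊆ N, ∀ W' ⊆ N, W ≠ W' →
      ¬ IsClusterGraph
          (SimpleGraph.fromEdgeSet (cliqueEdges u W ∪ starEdges v u W')) ∨
      ¬ IsClusterGraph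
          (SimpleGraph.fromEdgeSet (cliqueEdges u W' ∪ starEdges v u W))) := by
  constructor
  · intro W hW
    apply diag_cluster
    rintro (e | e)
    · exact huv e.symm
    · exact hv (hW e)
  · intro W hW W' hW' hne
    by_cases hsub : W ⊆ W'
    · have : ¬ W' ⊆ W := fun h' => hne (Set.Subset.antisymm hsub h')
      obtain ⟨x, hx, hx'⟩ := Set.not_subset.mp this
      exact Or.inr (off_diag_not_cluster u v hu hv huv hW' hW hx hx')
    · obtain ⟨x, hx, hx'⟩ := Set.not_subset.mp hsub
      exact Or.inl (off_diag_not_cluster u v hu hv huv hW hW' hx hx')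
end
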